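/- arXiv:2101.03716 — 5 statements merged into one kernel-verified Lean document; each statement's English description precedes it below -/
import Mathlib

section
/- Let X = {x ∈ Z^n_{≥0} : Σ_i x_i ≤ a} for a positive integer a, with benefits [τ(x)]_i = τ_i x_i for positive integers τ_1 ≥ ... ≥ τ_n, and let L = lcm(τ_1,...,τ_n). If x(1),...,x(T) ∈ X are allocations over T periods such that τ_i Σ_{t=1}^T x_i(t) is the same positive value for all i (perfect nontrivial fairness), then T ≥ ⌈(1/a) Σ_{i=1}^n L/τ_i⌉. -/
/-- Lower bound on the number of periods needed for perfect
nontrivial fairness over the simplicial set `{x ∈ ℤ^n_{≥0} : ∑ x_i ≤ a}`. -/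
theorem simplicial_fairness_lower_bound (n a T : ℕ) (ha : 0 < a)
    (τ : Fin n → ℕ) (hτ : ∀ i, 0 < τ i)
    (hsorted : ∀ i j : Fin n, i ≤ j → τ j ≤ τ i)
    (x : Fin T → Fin n → ℕ) (hX : ∀ t, ∑ i, x t i ≤ a)
    (g : ℕ) (hg : 0 < g) (hfair : ∀ i, τ i * ∑ t, x t i = g) :
    ⌈(∑ i, ((Finset.univ.lcm τ / τ i : ℕ) : ℚ)) / (a : ℚ)⌉₊ ≤ T := by
  set L := Finset.univ.lcm τ with hL
  have hdvd : ∀ i : Fin n, τ i ∣ g := fun i => ⟨_, (hfair i).symm⟩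
  have hLdvd : L ∣ g := Finset.lcm_dvd (fun i _ => hdvd i)
  have hLg : L ≤ g := Nat.le_of_dvd hg hLdvd
  have hkey : ∑ i, L / τ i ≤ T * a := by
    calc ∑ i, L / τ i ≤ ∑ i, ∑ t, x t i := by
          refine Finset.sum_le_sum fun i _ => ?_
          have : g / τ i = ∑ t, x t i :=
            Nat.div_eq_of_eq_mul_left (hτ i) (by rw [mul_comm]; exact (hfair i).symm)
          calc L / τ i ≤ g / τ i := Nat.div_le_div_right hLg
            _ = ∑ t, x t i := this
      _ = ∑ t, ∑ i, x t i := Finset.sum_comm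
      _ ≤ ∑ _t : Fin T, a := Finset.sum_le_sum fun t _ => hX t
      _ = T * a := by simp [Finset.sum_const, Nat.smul_one_eq_cast]
  rw [Nat.ceil_le, div_le_iff₀ (by exact_mod_cast ha)]
  push_cast
  exact_mod_cast hkey
end

section
/- Let X = {x ∈ Z^n_{≥0} : Σ_i x_i ≤ a} with benefits [τ(x)]_i = τ_i x_i for positive integers τ_1 ≥ ... ≥ τ_n, L = lcm(τ_1,...,τ_n), and T̄ = ⌈(1/a) Σ_{i=1}^n L/τ_i⌉ > 1. If the inefficiency bound satisfies (τ_1 - min(τ_n, τ_1/a))/τ_1 ≤ η̄ < 1, then there exist allocations x(1),...,x(T̄) ∈ X, each with ineff(x(t)) ≤ η̄, such that every stakeholder receives the same total benefit L. -/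
/-!
Stakeholder `i` must receive `mᵢ = L / τᵢ` units in total. Lay all `M = ∑ mᵢ` units out on a
line in order of increasing `τ`, so that stakeholder `1` comes last, and cut the line into
consecutive periods of `a` units (unit `u` is handed out in period `u / a`); `T̄ = ⌈M / a⌉`
periods suffice. Every period but the last is full, so its benefit is at least `a τₙ`; the last
one contains the final unit, which belongs to stakeholder `1`, so its benefit is at least `τ₁`.
Either way the benefit is at least `a · min(τₙ, τ₁ / a)`, which is exactly the inefficiency bound.
-/

open Finset

theorem sum_range_sum_Ico_of_antitone {M : Type*} [AddCommMonoid M] (f : ℕ → M)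
    {P : ℕ → ℕ} (hP : Antitone P) (N : ℕ) :
    ∑ k ∈ range N, ∑ u ∈ Ico (P (k + 1)) (P k), f u = ∑ u ∈ Ico (P N) (P 0), f u := by
  induction N with
  | zero => simp
  | succ N ih =>
    rw [sum_range_succ, ih, add_comm, sum_Ico_consecutive _ (hP N.le_succ) (hP N.zero_le)]

theorem filter_range_div_eq_Ico {M a t : ℕ} (ha : 0 < a) (h : (t + 1) * a ≤ M) :
    {u ∈ range M | u / a = t} = Ico (t * a) (t * a + a) := by
  ext u
  rw [Nat.add_one_mul] at h
  simp only [mem_filter, mem_range, mem_Ico, Nat.div_eq_iff ha]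
  omega

theorem card_filter_div_eq_le (s : Finset ℕ) {a : ℕ} (ha : 0 < a) (t : ℕ) :
    #{u ∈ s | u / a = t} ≤ a := by
  calc #{u ∈ s | u / a = t} ≤ #(Ico (t * a) (t * a + a)) := by
        refine card_le_card fun u hu => ?_
        simp only [mem_filter, mem_Ico, Nat.div_eq_iff ha] at hu ⊢
        omega
    _ = a := by simp

theorem natCeil_div_mul_bounds (M : ℕ) {a : ℕ} (ha : 0 < a) :
    M ≤ ⌈(M : ℚ) / a⌉₊ * a ∧ ⌈(M : ℚ) / a⌉₊ * a < M + a := by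
  have haQ : (0 : ℚ) < a := by exact_mod_cast ha
  have hle := Nat.le_ceil ((M : ℚ) / a)
  have hlt := Nat.ceil_lt_add_one (div_nonneg (Nat.cast_nonneg M) haQ.le)
  rw [div_le_iff₀ haQ] at hle
  rw [← sub_lt_iff_lt_add, lt_div_iff₀ haQ, sub_mul, one_mul, sub_lt_iff_lt_add] at hlt
  exact ⟨by exact_mod_cast hle, by exact_mod_cast hlt⟩

theorem div_sub_le_of_min_le {a τ₀ τ' B : ℝ} (ha : 0 < a) (hτ₀ : 0 < τ₀)
    (hB : min (a * τ') τ₀ ≤ B) : (a * τ₀ - B) / (a * τ₀) ≤ (τ₀ - min τ' (τ₀ / a)) / τ₀ := by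
  have hmin : a * min τ' (τ₀ / a) = min (a * τ') τ₀ := by
    rw [mul_min_of_nonneg _ _ ha.le, mul_div_cancel₀ _ ha.ne']
  rw [← mul_div_mul_left _ τ₀ ha.ne', mul_sub, hmin]
  gcongr

section GreedyAllocation

variable {n : ℕ}

def suffixSum (m : Fin n → ℕ) (k : ℕ) : ℕ := ∑ j : Fin n with k ≤ j.val, m j

theorem suffixSum_zero (m : Fin n → ℕ) : suffixSum m 0 = ∑ j, m j := by
  simp [suffixSum]

theorem suffixSum_self (m : Fin n → ℕ) : suffixSum m n = 0 := by
  simp [suffixSum]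

theorem suffixSum_antitone (m : Fin n → ℕ) : Antitone (suffixSum m) := fun _ _ hkl =>
  sum_le_sum_of_subset (monotone_filter_right _ fun _ _ h => hkl.trans h)

theorem suffixSum_eq_add (m : Fin n → ℕ) (i : Fin n) :
    suffixSum m i = m i + suffixSum m (i + 1) := by
  unfold suffixSum
  rw [← add_sum_erase _ _ (mem_filter.2 ⟨mem_univ i, le_refl i.val⟩)]
  congr 2
  ext j
  simp only [mem_erase, mem_filter, mem_univ, true_and, ne_eq, Fin.ext_iff]
  omega

def greedyAllocation (m : Fin n → ℕ) (a t : ℕ) (i : Fin n) : ℕ :=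
  #{u ∈ Ico (suffixSum m (i + 1)) (suffixSum m i) | u / a = t}

variable (m : Fin n → ℕ) {a : ℕ}

theorem sum_greedyAllocation_eq_card (t : ℕ) :
    ∑ i, greedyAllocation m a t i = #{u ∈ range (∑ j, m j) | u / a = t} := by
  simp only [greedyAllocation, card_filter]
  rw [Fin.sum_univ_eq_sum_range (fun k => ∑ u ∈ Ico (suffixSum m (k + 1)) (suffixSum m k),
      if u / a = t then 1 else 0), sum_range_sum_Ico_of_antitone _ (suffixSum_antitone m),
    suffixSum_self, suffixSum_zero, range_eq_Ico]

theorem sum_greedyAllocation_le (ha : 0 < a) (t : ℕ) : ∑ i, greedyAllocation m a t i ≤ a :=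
  sum_greedyAllocation_eq_card m t ▸ card_filter_div_eq_le _ ha t

theorem sum_greedyAllocation_of_le (ha : 0 < a) {t : ℕ} (ht : (t + 1) * a ≤ ∑ j, m j) :
    ∑ i, greedyAllocation m a t i = a := by
  rw [sum_greedyAllocation_eq_card, filter_range_div_eq_Ico ha ht, Nat.card_Ico,
    Nat.add_sub_cancel_left]

theorem sum_greedyAllocation_periods {T : ℕ} (hT : ∑ j, m j ≤ T * a) (i : Fin n) :
    ∑ t : Fin T, greedyAllocation m a t i = m i := by
  have hperiod : ∀ u ∈ Ico (suffixSum m (i + 1)) (suffixSum m i), u / a ∈ range T := by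
    intro u hu
    rw [mem_Ico] at hu
    have hiP : suffixSum m i ≤ ∑ j, m j := suffixSum_zero m ▸ suffixSum_antitone m (Nat.zero_le _)
    exact mem_range.2 (Nat.div_lt_of_lt_mul (by rw [mul_comm]; omega))
  rw [Fin.sum_univ_eq_sum_range (fun t => greedyAllocation m a t i)]
  unfold greedyAllocation
  rw [← card_eq_sum_card_fiberwise hperiod, Nat.card_Ico, suffixSum_eq_add m i,
    Nat.add_sub_cancel]

theorem one_le_greedyAllocation_last (hn : 0 < n) (hm : 0 < m ⟨0, hn⟩) :
    1 ≤ greedyAllocation m a ((∑ j, m j - 1) / a) ⟨0, hn⟩ := by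
  have h := suffixSum_eq_add m ⟨0, hn⟩
  refine card_pos.2 ⟨∑ j, m j - 1, mem_filter.2 ⟨mem_Ico.2 ?_, rfl⟩⟩
  simp only [suffixSum_zero] at h ⊢
  omega

theorem min_le_benefit_greedyAllocation (ha : 0 < a) (hn : 0 < n) (hm : 0 < m ⟨0, hn⟩)
    {τ : Fin n → ℕ} (hτ : Antitone τ) {T : ℕ} (hM : ∑ j, m j ≤ T * a)
    (hT : T * a < ∑ j, m j + a) (t : Fin T) :
    min (a * τ ⟨n - 1, Nat.sub_lt hn Nat.one_pos⟩) (τ ⟨0, hn⟩) ≤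
      ∑ i, τ i * greedyAllocation m a t i := by
  by_cases hfull : t.val + 1 < T
  · have ht : (t.val + 1) * a ≤ ∑ j, m j := by
      have := Nat.mul_le_mul_right a hfull
      rw [Nat.add_one_mul] at this
      omega
    calc min (a * τ ⟨n - 1, _⟩) (τ ⟨0, hn⟩)
        ≤ τ ⟨n - 1, _⟩ * ∑ i, greedyAllocation m a t i := by
          rw [sum_greedyAllocation_of_le m ha ht, mul_comm]
          exact min_le_left _ _
      _ ≤ ∑ i, τ i * greedyAllocation m a t i := by
          rw [mul_sum]
          gcongr with i
          exact hτ (Fin.mk_le_mk.2 (by omega))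
  · rw [show T = t.val + 1 by omega, Nat.add_one_mul] at hM hT
    have ht : t.val = (∑ j, m j - 1) / a := by
      rw [eq_comm, Nat.div_eq_iff ha]
      omega
    calc min (a * τ ⟨n - 1, _⟩) (τ ⟨0, hn⟩)
        ≤ τ ⟨0, hn⟩ * greedyAllocation m a t ⟨0, hn⟩ := by
          rw [ht]
          exact (min_le_right _ _).trans
            (Nat.le_mul_of_pos_right _ (one_le_greedyAllocation_last m hn hm))
      _ ≤ ∑ i, τ i * greedyAllocation m a t i :=
          single_le_sum (f := fun i => τ i * greedyAllocation m a t i)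
            (fun _ _ => Nat.zero_le _) (mem_univ _)

end GreedyAllocation

theorem simplicial_fairness_achievable_general (n a : ℕ) (ha : 0 < a) (hn : 0 < n)
    (τ : Fin n → ℕ) (hτ : ∀ i, 0 < τ i)
    (hsorted : ∀ i j : Fin n, i ≤ j → τ j ≤ τ i)
    (ηbar : ℝ)
    (hη1 : ((τ ⟨0, hn⟩ : ℝ) - min ((τ ⟨n - 1, Nat.sub_lt hn Nat.one_pos⟩ : ℝ))
        ((τ ⟨0, hn⟩ : ℝ) / a)) / (τ ⟨0, hn⟩ : ℝ) ≤ ηbar) :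
    ∃ x : Fin (⌈(∑ i, ((Finset.univ.lcm τ / τ i : ℕ) : ℚ)) / (a : ℚ)⌉₊) → Fin n → ℕ,
      (∀ t, ∑ i, x t i ≤ a) ∧
      (∀ t, ((a : ℝ) * (τ ⟨0, hn⟩ : ℝ) - ∑ i, (τ i : ℝ) * (x t i : ℝ)) /
          ((a : ℝ) * (τ ⟨0, hn⟩ : ℝ)) ≤ ηbar) ∧
      (∀ i, τ i * ∑ t, x t i = Finset.univ.lcm τ) := by
  set L := univ.lcm τ
  set m : Fin n → ℕ := fun i => L / τ i
  have hmL (i : Fin n) : τ i * m i = L := Nat.mul_div_cancel' (dvd_lcm (mem_univ i))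
  have hL : L ≠ 0 := by
    simpa [L, Finset.lcm_eq_zero_iff] using fun i => (hτ i).ne'
  have hm0 : 0 < m ⟨0, hn⟩ := Nat.pos_of_ne_zero fun h => hL (by rw [← hmL, h, mul_zero])
  have hcast : (∑ i, ((L / τ i : ℕ) : ℚ)) = ((∑ i, m i : ℕ) : ℚ) := by push_cast; rfl
  obtain ⟨hM, hT⟩ := natCeil_div_mul_bounds (∑ i, m i) ha
  rw [← hcast] at hM hT
  refine ⟨fun t => greedyAllocation m a t, fun t => sum_greedyAllocation_le m ha t, fun t => ?_,
    fun i => by rw [sum_greedyAllocation_periods m hM, hmL]⟩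
  have hbenefit := min_le_benefit_greedyAllocation m ha hn hm0 hsorted hM hT t
  refine le_trans (div_sub_le_of_min_le (by exact_mod_cast ha) (by exact_mod_cast hτ _) ?_) hη1
  exact_mod_cast hbenefit

/-- Perfect fairness (common total benefit `L`) is achievable in
`T̄ = ⌈(1/a) ∑ L/τ_i⌉` periods when the inefficiency bound satisfies
`(τ_1 - min(τ_n, τ_1/a))/τ_1 ≤ η̄ < 1`. -/
theorem simplicial_fairness_achievable (n a : ℕ) (ha : 0 < a) (hn : 0 < n)
    (τ : Fin n → ℕ) (hτ : ∀ i, 0 < τ i)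
    (hsorted : ∀ i j : Fin n, i ≤ j → τ j ≤ τ i)
    (ηbar : ℝ)
    (hη1 : ((τ ⟨0, hn⟩ : ℝ) - min ((τ ⟨n - 1, Nat.sub_lt hn Nat.one_pos⟩ : ℝ))
        ((τ ⟨0, hn⟩ : ℝ) / a)) / (τ ⟨0, hn⟩ : ℝ) ≤ ηbar)
    (hη2 : ηbar < 1)
    (hTbar : 1 < ⌈(∑ i, ((Finset.univ.lcm τ / τ i : ℕ) : ℚ)) / (a : ℚ)⌉₊) :
    ∃ x : Fin (⌈(∑ i, ((Finset.univ.lcm τ / τ i : ℕ) : ℚ)) / (a : ℚ)⌉₊) → Fin n → ℕ,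
      (∀ t, ∑ i, x t i ≤ a) ∧
      (∀ t, ((a : ℝ) * (τ ⟨0, hn⟩ : ℝ) - ∑ i, (τ i : ℝ) * (x t i : ℝ)) /
          ((a : ℝ) * (τ ⟨0, hn⟩ : ℝ)) ≤ ηbar) ∧
      (∀ i, τ i * ∑ t, x t i = Finset.univ.lcm τ) :=
  simplicial_fairness_achievable_general n a ha hn τ hτ hsorted ηbar hη1
end

section
/- For every integer T̂ ≥ 2 and every positive integer a, taking n = 2 stakeholders with τ_1 = (T̂-1)a and τ_2 = 1 and X = {x ∈ Z^2_{≥0} : x_1 + x_2 ≤ a}: if the inefficiency bound satisfies η̄ < ((T̂-1)a - 1)/((T̂-1)a), then no sequence of T̂ allocations in X, each satisfying ineff(x(t)) ≤ η̄, achieves perfect nontrivial fairness. -/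
/-- With `n = 2`, `τ_1 = (T̂-1)a`, `τ_2 = 1`, and a stricter
inefficiency bound `η̄ < ((T̂-1)a - 1)/((T̂-1)a)`, no sequence of `T̂`
allocations achieves perfect nontrivial fairness. -/
theorem stricter_efficiency_counterexample (That a : ℕ) (hT : 2 ≤ That) (ha : 0 < a)
    (ηbar : ℝ)
    (hη : ηbar < ((((That - 1) * a : ℕ) : ℝ) - 1) / (((That - 1) * a : ℕ) : ℝ)) :
    ¬ ∃ x : Fin That → Fin 2 → ℕ,
        (∀ t, x t 0 + x t 1 ≤ a) ∧
        (∀ t, ((a * ((That - 1) * a) : ℕ) -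
            (((That - 1) * a : ℕ) * (x t 0 : ℝ) + (x t 1 : ℝ))) /
            ((a * ((That - 1) * a) : ℕ) : ℝ) ≤ ηbar) ∧
        ((That - 1) * a) * (∑ t, x t 0) = ∑ t, x t 1 ∧
        0 < ∑ t, x t 1 := by
  rintro ⟨x, hbud, hineff, hfair, -⟩
  set M : ℕ := (That - 1) * a with hM
  have hMpos : 0 < M := Nat.mul_pos (by omega) ha
  have hMa : a ≤ M := by
    have : 1 * a ≤ (That - 1) * a := Nat.mul_le_mul_right a (by omega)
    simpa using this
  have hMR : (0:ℝ) < (M:ℝ) := by exact_mod_cast hMpos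
  have hAR : (0:ℝ) < ((a * M : ℕ) : ℝ) := by exact_mod_cast Nat.mul_pos ha hMpos
  -- each period: M * x₁ + x₂ > a
  have key : ∀ t, a < M * x t 0 + x t 1 := by
    intro t
    have h1 := (hineff t).trans_lt hη
    rw [div_lt_div_iff₀ hAR hMR] at h1
    have hcast : ((a * M : ℕ) : ℝ) = (a:ℝ) * (M:ℝ) := by push_cast; ring
    have h2 : (a:ℝ) < (M:ℝ) * (x t 0 : ℝ) + (x t 1 : ℝ) := by
      nlinarith [hMR, h1, hcast]
    exact_mod_cast h2
  have hx1 : ∀ t, 1 ≤ x t 0 := by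
    intro t
    by_contra h
    have h0 : x t 0 = 0 := by omega
    have := key t
    have := hbud t
    rw [h0] at *
    omega
  have hsum1 : That ≤ ∑ t, x t 0 := by
    calc That = ∑ _t : Fin That, 1 := by simp
    _ ≤ ∑ t, x t 0 := Finset.sum_le_sum fun t _ => hx1 t
  have hsumbud : ∑ t, (x t 0 + x t 1) ≤ That * a := by
    calc ∑ t, (x t 0 + x t 1) ≤ ∑ _t : Fin That, a :=
        Finset.sum_le_sum fun t _ => hbud t
    _ = That * a := by simp [Finset.sum_const, Nat.smul_one_eq_cast]
  have hsplit : ∑ t, (x t 0 + x t 1) = (∑ t, x t 0) + ∑ t, x t 1 :=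
    Finset.sum_add_distrib
  have : (M + 1) * (∑ t, x t 0) ≤ That * a := by
    have : (M + 1) * (∑ t, x t 0) = (∑ t, x t 0) + M * (∑ t, x t 0) := by ring
    omega
  nlinarith [hsum1, hMa, Nat.mul_le_mul_left (M+1) hsum1]
end

section
/- Let X = {x ∈ R^n_{≥0} : Σ_i x_i ≤ a, ‖x‖_0 ≤ r}, benefits [τ(x)]_i = τ_i x_i with positive integers τ_1 ≥ ... ≥ τ_n, T̄ = ⌈n/r⌉, and let n = pr + q with 0 ≤ q < r. Define v = a / max{ Σ_{i=(T̄-1)r+1}^{n} 1/τ_i , Σ_{i=(p-1)r+1}^{pr} 1/τ_i }. Then the block allocation that in period t ≤ T̄-1 gives v/τ_i to stakeholders i = (t-1)r+1,...,tr (and 0 to the rest), and in period T̄ gives v/τ_i to stakeholders i = (T̄-1)r+1,...,n, is feasible in every period (satisfying both the budget and sparsity constraints) and gives every stakeholder total benefit exactly v. -/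
lemma block_sum_eq {n : ℕ} (r t : ℕ) (hr : 0 < r) (h : t*r + r ≤ n) (f : Fin n → ℝ) :
    ∑ i ∈ Finset.univ.filter (fun i : Fin n => (i:ℕ)/r = t), f i
      = ∑ j : Fin r, f ⟨t*r+(j:ℕ), by omega⟩ := by
  apply Finset.sum_nbij' (i := fun i : Fin n => (⟨(i:ℕ) % r, Nat.mod_lt _ hr⟩ : Fin r))
    (j := fun j : Fin r => (⟨t*r+(j:ℕ), by omega⟩ : Fin n))
  · intro a _; exact Finset.mem_univ _
  · intro b _
    simp only [Finset.mem_filter, Finset.mem_univ, true_and]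
    rw [add_comm, Nat.add_mul_div_right _ _ hr, Nat.div_eq_of_lt b.isLt, Nat.zero_add]
  · intro a ha
    simp only [Finset.mem_filter, Finset.mem_univ, true_and] at ha
    ext
    simp only
    conv_rhs => rw [← Nat.div_add_mod (a:ℕ) r]
    rw [ha, mul_comm]
  · intro b _
    ext
    simp only
    rw [add_comm, Nat.add_mul_mod_self_right, Nat.mod_eq_of_lt b.isLt]
  · intro a ha
    simp only [Finset.mem_filter, Finset.mem_univ, true_and] at ha
    congr 1
    ext
    simp only
    conv_lhs => rw [← Nat.div_add_mod (a:ℕ) r]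
    rw [ha, mul_comm]

lemma sparse_block_allocation_aux (n r T : ℕ) (hn : 1 ≤ n) (hr : 1 ≤ r)
    (hT1 : 1 ≤ T) (hTle : n ≤ T * r) (hTlt : (T-1)*r < n)
    (a : ℝ) (ha : 0 < a)
    (τ : Fin n → ℕ) (hτ : ∀ i, 0 < τ i)
    (hsorted : ∀ i j : Fin n, i ≤ j → τ j ≤ τ i)
    (p : ℕ) (hp : p = n / r)
    (v : ℝ)
    (hv : v = a / max
      (∑ i ∈ Finset.univ.filter
        (fun i : Fin n => (i : ℕ) / r = T - 1), ((τ i : ℝ))⁻¹)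
      (∑ i ∈ Finset.univ.filter
        (fun i : Fin n => (i : ℕ) / r = p - 1), ((τ i : ℝ))⁻¹))
    (x : Fin T → Fin n → ℝ)
    (hx : ∀ t i, x t i = if (i : ℕ) / r = (t : ℕ) then v / (τ i : ℝ) else 0) :
    (∀ t, ∑ i, x t i ≤ a) ∧
    (∀ t, (Finset.univ.filter (fun i => x t i ≠ 0)).card ≤ r) ∧
    (∀ t i, 0 ≤ x t i) ∧
    (∀ i, (τ i : ℝ) * ∑ t, x t i = v) := by
  have hr0 : 0 < r := hr
  have hdiv : ∀ i : Fin n, (i:ℕ)/r < T := by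
    intro i
    rw [Nat.div_lt_iff_lt_mul hr0]
    exact lt_of_lt_of_le i.isLt hTle
  have hlast : (n-1)/r = T-1 := by
    apply Nat.le_antisymm
    · have : (n-1)/r < T := by
        rw [Nat.div_lt_iff_lt_mul hr0]; omega
      omega
    · rw [Nat.le_div_iff_mul_le hr0]; omega
  set S1 := ∑ i ∈ Finset.univ.filter
        (fun i : Fin n => (i : ℕ) / r = T - 1), ((τ i : ℝ))⁻¹ with hS1
  set S2 := ∑ i ∈ Finset.univ.filter
        (fun i : Fin n => (i : ℕ) / r = p - 1), ((τ i : ℝ))⁻¹ with hS2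
  have hS1pos : 0 < S1 := by
    apply Finset.sum_pos
    · intro i _
      exact inv_pos.mpr (by exact_mod_cast hτ i)
    · refine ⟨⟨n-1, by omega⟩, ?_⟩
      simp only [Finset.mem_filter, Finset.mem_univ, true_and]
      exact hlast
  have hMpos : 0 < max S1 S2 := lt_of_lt_of_le hS1pos (le_max_left _ _)
  have hvpos : 0 < v := by rw [hv]; exact div_pos ha hMpos
  have hblock : ∀ t : Fin T,
      (∑ i ∈ Finset.univ.filter (fun i : Fin n => (i:ℕ)/r = (t:ℕ)), ((τ i : ℝ))⁻¹)
        ≤ max S1 S2 := by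
    intro t
    by_cases hteq : (t:ℕ) = T - 1
    · rw [hteq]; exact le_max_left _ _
    · have ht : (t:ℕ) + 1 ≤ T - 1 := by have := t.isLt; omega
      have hfull : (t:ℕ)*r + r ≤ n :=
        le_trans (by calc (t:ℕ)*r + r = ((t:ℕ)+1)*r := by ring
          _ ≤ (T-1)*r := Nat.mul_le_mul_right _ ht) (le_of_lt hTlt)
      have hp1 : 1 ≤ p := by
        rw [hp, Nat.le_div_iff_mul_le hr0]
        have : 1 * r ≤ (T-1)*r := Nat.mul_le_mul_right _ (by omega)
        omega
      have htp : (t:ℕ) ≤ p - 1 := by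
        have : T - 1 ≤ p := by
          rw [hp, Nat.le_div_iff_mul_le hr0]; omega
        omega
      have hpfull : (p-1)*r + r ≤ n := by
        have h1 : (p-1)*r + r = ((p-1)+1)*r := by ring
        have h2 : (p-1)+1 = p := by omega
        rw [h1, h2, hp]
        exact Nat.div_mul_le_self n r
      refine le_trans ?_ (le_max_right _ _)
      rw [hS2, block_sum_eq r ((t:ℕ)) hr0 hfull, block_sum_eq r (p-1) hr0 hpfull]
      apply Finset.sum_le_sum
      intro j _
      have hij : (⟨(t:ℕ)*r+(j:ℕ), by omega⟩ : Fin n) ≤ ⟨(p-1)*r+(j:ℕ), by omega⟩ := by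
        simp only [Fin.mk_le_mk]
        have := Nat.mul_le_mul_right r htp
        omega
      have hle := hsorted _ _ hij
      gcongr
      exact_mod_cast hτ _
  refine ⟨?_, ?_, ?_, ?_⟩
  · -- budget
    intro t
    have hsum : ∑ i, x t i
        = v * ∑ i ∈ Finset.univ.filter (fun i : Fin n => (i:ℕ)/r = (t:ℕ)), ((τ i : ℝ))⁻¹ := by
      rw [Finset.mul_sum, ← Finset.sum_filter_of_ne (p := fun i : Fin n => (i:ℕ)/r = (t:ℕ))]
      · apply Finset.sum_congr rfl
        intro i hi
        simp only [Finset.mem_filter, Finset.mem_univ, true_and] at hi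
        rw [hx, if_pos hi, div_eq_mul_inv]
      · intro i _ hne
        rw [hx] at hne
        by_contra hc
        exact hne (if_neg hc)
    rw [hsum, hv, div_mul_eq_mul_div, div_le_iff₀ hMpos]
    apply mul_le_mul_of_nonneg_left (hblock t) (le_of_lt ha)
  · -- sparsity
    intro t
    have hsub : Finset.univ.filter (fun i => x t i ≠ 0)
        ⊆ Finset.univ.filter (fun i : Fin n => (i:ℕ)/r = (t:ℕ)) := by
      intro i hi
      simp only [Finset.mem_filter, Finset.mem_univ, true_and] at *
      by_contra hc
      exact hi (by rw [hx, if_neg hc])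
    refine le_trans (Finset.card_le_card hsub) ?_
    have : (Finset.univ.filter (fun i : Fin n => (i:ℕ)/r = (t:ℕ))).card
        ≤ (Finset.range r).card := by
      apply Finset.card_le_card_of_injOn (f := fun i : Fin n => (i:ℕ) % r)
      · intro i _
        exact Finset.mem_range.mpr (Nat.mod_lt _ hr0)
      · intro i hi j hj hmod
        simp only [Finset.coe_filter, Set.mem_setOf_eq, Finset.mem_univ, true_and] at hi hj
        have hmod' : (i:ℕ) % r = (j:ℕ) % r := hmod
        have hi' := Nat.div_add_mod (i:ℕ) r
        have hj' := Nat.div_add_mod (j:ℕ) r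
        apply Fin.ext
        rw [← hi', ← hj', hi, hj, hmod']
    simpa using this
  · -- nonneg
    intro t i
    rw [hx]
    split
    · exact le_of_lt (div_pos hvpos (by exact_mod_cast hτ i))
    · exact le_refl 0
  · -- benefit
    intro i
    have ht0 : (i:ℕ)/r < T := hdiv i
    set t0 : Fin T := ⟨(i:ℕ)/r, ht0⟩ with ht0def
    have hsum : ∑ t, x t i = v / (τ i : ℝ) := by
      rw [Finset.sum_eq_single t0]
      · rw [hx, if_pos rfl]
      · intro t _ hne
        rw [hx, if_neg]
        intro hc
        exact hne (by apply Fin.ext; simp [ht0def, ← hc])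
      · intro h; exact absurd (Finset.mem_univ t0) h
    have hne : ((τ i : ℕ):ℝ) ≠ 0 := by
      exact_mod_cast (hτ i).ne'
    rw [hsum, mul_comm, div_mul_cancel₀ _ hne]

/-- The block allocation for the sparse simplicial set is feasible
in every period and gives every stakeholder total benefit exactly `v`.
Stakeholders are indexed `0,…,n-1`; the block of period `t` consists of the
indices `i` with `i / r = t`, so period `t ≤ T̄-1` serves `tr,…,tr+r-1` and the
last period `T̄-1` serves `(T̄-1)r,…,n-1`. -/
theorem sparse_block_allocation (n r : ℕ) (hn : 1 ≤ n) (hr : 1 ≤ r)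
    (a : ℝ) (ha : 0 < a)
    (τ : Fin n → ℕ) (hτ : ∀ i, 0 < τ i)
    (hsorted : ∀ i j : Fin n, i ≤ j → τ j ≤ τ i)
    (p q : ℕ) (hp : p = n / r) (hq : q = n % r)
    (v : ℝ)
    (hv : v = a / max
      (∑ i ∈ Finset.univ.filter
        (fun i : Fin n => (i : ℕ) / r = ⌈(n : ℚ) / (r : ℚ)⌉₊ - 1), ((τ i : ℝ))⁻¹)
      (∑ i ∈ Finset.univ.filter
        (fun i : Fin n => (i : ℕ) / r = p - 1), ((τ i : ℝ))⁻¹))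
    (x : Fin ⌈(n : ℚ) / (r : ℚ)⌉₊ → Fin n → ℝ)
    (hx : ∀ t i, x t i = if (i : ℕ) / r = (t : ℕ) then v / (τ i : ℝ) else 0) :
    (∀ t, ∑ i, x t i ≤ a) ∧
    (∀ t, (Finset.univ.filter (fun i => x t i ≠ 0)).card ≤ r) ∧
    (∀ t i, 0 ≤ x t i) ∧
    (∀ i, (τ i : ℝ) * ∑ t, x t i = v) := by
  have hr0 : 0 < r := hr
  have hrQ : (0:ℚ) < (r:ℚ) := by exact_mod_cast hr0
  refine sparse_block_allocation_aux n r _ hn hr ?_ ?_ ?_ a ha τ hτ hsorted p hp v hv x hx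
  · exact Nat.one_le_ceil_iff.mpr (div_pos (by exact_mod_cast hn) hrQ)
  · have h1 : (n:ℚ)/(r:ℚ) ≤ ⌈(n : ℚ) / (r : ℚ)⌉₊ := Nat.le_ceil _
    have h2 : (n:ℚ) ≤ ((⌈(n : ℚ) / (r : ℚ)⌉₊ : ℕ):ℚ) * (r:ℚ) := by
      rwa [div_le_iff₀ hrQ] at h1
    exact_mod_cast h2
  · have hT1 : 1 ≤ ⌈(n : ℚ) / (r : ℚ)⌉₊ :=
      Nat.one_le_ceil_iff.mpr (div_pos (by exact_mod_cast hn) hrQ)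
    have h1 : ((⌈(n : ℚ) / (r : ℚ)⌉₊ - 1 : ℕ):ℚ) < (n:ℚ)/(r:ℚ) := Nat.lt_ceil.mp (by omega)
    have h2 : ((⌈(n : ℚ) / (r : ℚ)⌉₊ - 1 : ℕ):ℚ) * (r:ℚ) < (n:ℚ) := by
      rwa [lt_div_iff₀ hrQ] at h1
    exact_mod_cast h2
end

section
/- No valid cutting plane can separate an infeasible transition-constrained solution: with four configurations x^1 = (3,3,3,3), x^2 = (4,2,3,3), x^3 = (2,4,3,3), x^4 = (3,3,2,4), transition budget r = 1, and T = 4, the multiplicity vector q = (1,1,1,1) admits no ordering of the four configurations satisfying ‖x(t+1) - x(t)‖_1 ≤ 2 for all consecutive t (equivalently, its configuration graph, a star K_{1,3}, has no Hamiltonian path), while each of the vectors q^i = 4e_i, i = 1,...,4, trivially admits such an ordering; and q = (1,1,1,1) is a convex combination of q^1, q^2, q^3, q^4. -/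
def Xmat : Fin 4 → Fin 4 → ℤ :=
  ![![3, 3, 3, 3], ![4, 2, 3, 3], ![2, 4, 3, 3], ![3, 3, 2, 4]]

lemma no_perm : ¬ ∃ σ : Equiv.Perm (Fin 4), ∀ t : Fin 3,
    ∑ i, |Xmat (σ t.castSucc) i - Xmat (σ t.succ) i| ≤ 2 := by decide

/-- An infeasible transition-constrained solution that cannot be
separated by a cutting plane (Example `ex:confGr`): `q = (1,1,1,1)` admits no
valid ordering of the four configurations, each `q^i = 4e_i` trivially does,
yet `q` is a convex combination of the `q^i`. -/
theorem no_cutting_plane_example :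
    let X : Fin 4 → Fin 4 → ℤ :=
      ![![3, 3, 3, 3], ![4, 2, 3, 3], ![2, 4, 3, 3], ![3, 3, 2, 4]]
    -- q = (1,1,1,1): no ordering of the four configurations is feasible
    (¬ ∃ σ : Equiv.Perm (Fin 4),
      ∀ t : ℕ, ∀ ht : t + 1 < 4,
        ∑ i, |X (σ ⟨t, Nat.lt_of_succ_lt ht⟩) i - X (σ ⟨t + 1, ht⟩) i| ≤ 2) ∧
    -- each q^i = 4 e_i trivially admits a feasible ordering (the constant one)
    (∀ j : Fin 4, ∃ f : Fin 4 → Fin 4, (∀ t, f t = j) ∧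
      ∀ t : ℕ, ∀ ht : t + 1 < 4,
        ∑ i, |X (f ⟨t, Nat.lt_of_succ_lt ht⟩) i - X (f ⟨t + 1, ht⟩) i| ≤ 2) ∧
    -- (1,1,1,1) is a convex combination of the vectors q^i = 4 e_i
    ((fun _ : Fin 4 => (1 : ℝ)) =
      ∑ j : Fin 4, (1/4 : ℝ) • (fun j' : Fin 4 => if j' = j then (4 : ℝ) else 0)) := by
  intro X
  refine ⟨?_, ?_, ?_⟩
  · rintro ⟨σ, h⟩
    exact no_perm ⟨σ, fun t => h t.val (by omega)⟩
  · intro j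
    exact ⟨fun _ => j, fun _ => rfl, fun t ht => by simp⟩
  · funext j'
    simp [Finset.sum_apply, Finset.sum_ite_eq]
end
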